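/- arXiv:1610.00145 — 6 statements merged into one kernel-verified Lean document; each statement's English description precedes it below -/
import Mathlib

section
/- Let X be a metric space with basepoint x and H a subgroup of π₁(X,x) such that ⋃H (the set of loops representing elements of H) belongs to a pointclass 𝒫 closed under continuous preimages. Then for each fixed loop l₀, the left coset set ⋃([l₀]H) of loops homotopic to a loop of the form l₀ * l' with l' ∈ ⋃H is also in 𝒫. -/
open FundamentalGroup

attribute [local instance] Path.Homotopic.setoid

/-- The set of loops at `x` representing elements of the subgroup `H` of `π₁(X, x)`. -/
def loopsIn {X : Type} [TopologicalSpace X] {x : X} (H : Subgroup (FundamentalGroup X x)) :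
    Set (Path x x) :=
  {p : Path x x |
    FundamentalGroup.fromPath (X := TopCat.of X) (⟦p⟧ : Path.Homotopic.Quotient x x) ∈ H}

/-! The left coset `[l₀]H` is the preimage of `H` under left translation by `[l₀]⁻¹`, and on
loop space this translation is the continuous map `l ↦ l₀⁻¹ * l`. -/

namespace Path.Homotopic.Quotient

variable {X : Type} [TopologicalSpace X] {x₀ x₁ x₂ : X}

theorem eq_trans_iff_symm_trans_eq (γ : Path.Homotopic.Quotient x₀ x₁)
    (α : Path.Homotopic.Quotient x₀ x₂) (β : Path.Homotopic.Quotient x₁ x₂) :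
    α = γ.trans β ↔ γ.symm.trans α = β := by
  constructor
  · rintro rfl
    simp [← trans_assoc]
  · rintro rfl
    simp [← trans_assoc]

end Path.Homotopic.Quotient

theorem Path.homotopic_trans_iff_symm_trans_homotopic {X : Type} [TopologicalSpace X]
    {x₀ x₁ x₂ : X} (γ : Path x₀ x₁) (p : Path x₀ x₂) (q : Path x₁ x₂) :
    p.Homotopic (γ.trans q) ↔ (γ.symm.trans p).Homotopic q := by
  simp only [← Path.Homotopic.Quotient.eq, Path.Homotopic.Quotient.mk_trans,
    Path.Homotopic.Quotient.mk_symm]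
  exact Path.Homotopic.Quotient.eq_trans_iff_symm_trans_eq _ _ _

section loopsIn

variable {X : Type} [TopologicalSpace X] {x : X} (H : Subgroup (FundamentalGroup X x))

theorem exists_mem_loopsIn_homotopic_iff (p : Path x x) :
    (∃ q ∈ loopsIn H, p.Homotopic q) ↔ p ∈ loopsIn H := by
  refine ⟨?_, fun hp => ⟨p, hp, Path.Homotopic.refl p⟩⟩
  rintro ⟨q, hq, hpq⟩
  have hclass : (⟦p⟧ : Path.Homotopic.Quotient x x) = ⟦q⟧ := Quotient.sound hpq
  simpa only [loopsIn, Set.mem_ofPred_eq, hclass] using hq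

theorem setOf_homotopic_trans_loopsIn_eq_preimage (l₀ : Path x x) :
    {l : Path x x | ∃ l' ∈ loopsIn H, l.Homotopic (l₀.trans l')} =
      (l₀.symm.trans ·) ⁻¹' loopsIn H := by
  ext l
  simp only [Set.mem_ofPred_eq, Set.mem_preimage,
    Path.homotopic_trans_iff_symm_trans_homotopic, exists_mem_loopsIn_homotopic_iff]

end loopsIn

theorem coset_mem_pointclass_general
    (P : (Z : Type) → [inst : TopologicalSpace Z] → Set (Set Z))
    (hP : ∀ (Z W : Type) [TopologicalSpace Z] [TopologicalSpace W] (f : Z → W),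
      Continuous f → ∀ S ∈ P W, f ⁻¹' S ∈ P Z)
    {X : Type} [MetricSpace X] {x : X}
    (H : Subgroup (FundamentalGroup X x))
    (hH : loopsIn H ∈ P (Path x x)) (l₀ : Path x x) :
    {l : Path x x | ∃ l' ∈ loopsIn H, l.Homotopic (l₀.trans l')} ∈ P (Path x x) := by
  rw [setOf_homotopic_trans_loopsIn_eq_preimage]
  exact hP _ _ _ (continuous_const.path_trans continuous_id) _ hH

/-- If `𝒫` is a pointclass closed under continuous preimages and `H ≤ π₁(X, x)` has
`⋃H ∈ 𝒫`, then for each fixed loop `l₀` the left coset set `⋃([l₀]H)`, consisting of the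
loops homotopic to some `l₀ * l'` with `l' ∈ ⋃H`, is in `𝒫`. -/
theorem coset_mem_pointclass
    (P : (Z : Type) → [inst : TopologicalSpace Z] → Set (Set Z))
    (hP : ∀ (Z W : Type) [TopologicalSpace Z] [TopologicalSpace W] (f : Z → W),
      Continuous f → ∀ S ∈ P W, f ⁻¹' S ∈ P Z)
    {X : Type} [MetricSpace X] [PathConnectedSpace X] {x : X}
    (H : Subgroup (FundamentalGroup X x))
    (hH : loopsIn H ∈ P (Path x x)) (l₀ : Path x x) :
    {l : Path x x | ∃ l' ∈ loopsIn H, l.Homotopic (l₀.trans l')} ∈ P (Path x x) :=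
  coset_mem_pointclass_general P hP H hH l₀
end

section
/- Let X be a locally path-connected metric space and G a normal subgroup of π₁(X). If there exists an open cover 𝒰 of X such that every loop contained entirely in an element of 𝒰 represents an element of G, then G is open (the set of loops representing elements of G is open in each loop space L_x). -/
open FundamentalGroup

attribute [local instance] Path.Homotopic.setoid

/-- A loop `p` based at an arbitrary point `y` represents an element of the normal subgroup
`G ⊴ π₁(X, x₀)` (regarded as basepoint-free) if conjugating it back to the basepoint `x₀`
along some path lands in `G`. -/
def loopInBF {X : Type} [TopologicalSpace X] {x₀ : X}
    (G : Subgroup (FundamentalGroup X x₀)) {y : X} (p : Path y y) : Prop :=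
  ∃ ρ : Path x₀ y,
    FundamentalGroup.fromPath (X := TopCat.of X)
      (⟦(ρ.trans p).trans ρ.symm⟧ : Path.Homotopic.Quotient x₀ x₀) ∈ G

/-!
Carry every path to the basepoint along fixed connecting paths and read its homotopy class in
`π₁(X, x₀) ⧸ G`. By normality a loop represents an element of `G` exactly when this class is
trivial, so the hypothesis says that loops inside a member of the cover have trivial class.

Let `q` be uniformly close to `p`. Local path-connectedness, made uniform on the compact image
of `p`, joins `p t` to `q t` by a short path `γ t`. For `r` near `t` the square formed by
`p|[t, r]`, `γ r`, `q|[r, t]` and `γ t` is a loop inside one member of the cover (Lebesgue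
number). Hence the class of `p|[s, t] · γ t · q|[s, t]⁻¹` is locally constant in `t`, so constant
as `ℝ` is connected: `p|[s, t] · γ t ≡ γ s · q|[s, t]` modulo `G`. For `s = 0`, `t = 1` the paths
`γ 0` and `γ 1` are small loops, so `p` and `q` have the same class.
-/

open Set Metric Topology

section PathMod

variable {X : Type*} [TopologicalSpace X] {x₀ : X} (G : Subgroup (FundamentalGroup X x₀))
  [G.Normal]

open Path.Homotopic.Quotient in
theorem conj_mem_of_conj_mem {y : X} (σ σ' : Path x₀ y) (p : Path y y)
    (h : (mk ((σ.trans p).trans σ.symm) : FundamentalGroup X x₀) ∈ G) :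
    (mk ((σ'.trans p).trans σ'.symm) : FundamentalGroup X x₀) ∈ G := by
  set m : FundamentalGroup X x₀ := mk ((σ.trans p).trans σ.symm)
  set m' : FundamentalGroup X x₀ := mk ((σ'.trans p).trans σ'.symm)
  set c : FundamentalGroup X x₀ := mk (σ.trans σ'.symm)
  have hconj : m' = c * m * c⁻¹ := by
    rw [eq_mul_inv_iff_mul_eq, FundamentalGroup.mul_def, FundamentalGroup.mul_def]
    simp [m, m', c, ← trans_assoc (symm _)]
  rw [hconj]
  exact ‹G.Normal›.conj_mem m h c

variable [PathConnectedSpace X]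

/-- The inverse makes `pathMod` multiplicative for `Path.trans`: multiplication in
`FundamentalGroup` is composition in reverse order. -/
noncomputable def pathMod {a b : X} (u : Path a b) : FundamentalGroup X x₀ ⧸ G :=
  (QuotientGroup.mk (s := G) (Path.Homotopic.Quotient.mk
    (((PathConnectedSpace.somePath x₀ a).trans u).trans
      (PathConnectedSpace.somePath x₀ b).symm)))⁻¹

open Path.Homotopic.Quotient in
theorem pathMod_trans {a b c : X} (u : Path a b) (v : Path b c) :
    pathMod G (u.trans v) = pathMod G u * pathMod G v := by
  rw [pathMod, pathMod, pathMod, ← mul_inv_rev, ← QuotientGroup.mk_mul,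
    FundamentalGroup.mul_def]
  simp [← trans_assoc (symm _)]

theorem pathMod_refl (a : X) : pathMod G (Path.refl a) = 1 := by
  rw [pathMod, inv_eq_one, QuotientGroup.eq_one_iff]
  convert G.one_mem
  simp
  rfl

theorem pathMod_congr {a b : X} {u v : Path a b} (h : u.Homotopic v) :
    pathMod G u = pathMod G v := by
  rw [pathMod, pathMod,
    Path.Homotopic.Quotient.eq.mpr (((Path.Homotopic.refl _).hcomp h).hcomp (.refl _))]

theorem pathMod_symm {a b : X} (u : Path a b) : pathMod G u.symm = (pathMod G u)⁻¹ := by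
  rw [eq_inv_iff_mul_eq_one, ← pathMod_trans, ← pathMod_refl G b]
  exact pathMod_congr G (Path.Homotopic.symm_trans u)

theorem pathMod_cast {a b a' b' : X} (u : Path a b) (ha : a' = a) (hb : b' = b) :
    pathMod G (u.cast ha hb) = pathMod G u := by
  subst ha hb
  rfl

end PathMod

theorem loopInBF_iff_pathMod_eq_one {X : Type} [TopologicalSpace X] [PathConnectedSpace X]
    {x₀ : X} (G : Subgroup (FundamentalGroup X x₀)) [G.Normal] {y : X} (p : Path y y) :
    loopInBF G p ↔ pathMod G p = 1 := by
  rw [pathMod, inv_eq_one, QuotientGroup.eq_one_iff]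
  exact ⟨fun ⟨σ, hσ⟩ => conj_mem_of_conj_mem G σ _ p hσ, fun h => ⟨_, h⟩⟩

namespace ContinuousMap

variable {X : Type*} [TopologicalSpace X]

def segmentPath (f : C(ℝ, X)) (s t : ℝ) : Path (f s) (f t) :=
  (Path.segment s t).map f.continuous

theorem range_segmentPath (f : C(ℝ, X)) (s t : ℝ) :
    range (f.segmentPath s t) = f '' uIcc s t := by
  rw [segmentPath, Path.map_coe, range_comp, Path.range_segment, segment_eq_uIcc]

variable [PathConnectedSpace X] {x₀ : X} (G : Subgroup (FundamentalGroup X x₀)) [G.Normal]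

theorem pathMod_segmentPath_trans (f : C(ℝ, X)) (s t u : ℝ) :
    pathMod G (f.segmentPath s u) =
      pathMod G (f.segmentPath s t) * pathMod G (f.segmentPath t u) := by
  rw [← pathMod_trans, segmentPath, segmentPath, segmentPath, ← Path.map_trans]
  exact pathMod_congr G ((SimplyConnectedSpace.paths_homotopic _ _).map f)

theorem pathMod_segmentPath_self (f : C(ℝ, X)) (s : ℝ) : pathMod G (f.segmentPath s s) = 1 := by
  simpa using pathMod_segmentPath_trans G f s s s

end ContinuousMap

theorem Path.pathMod_extend_segmentPath {X : Type*} [TopologicalSpace X] [PathConnectedSpace X]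
    {x₀ : X} (G : Subgroup (FundamentalGroup X x₀)) [G.Normal] {a b : X} (p : Path a b) :
    pathMod G (p.extend.segmentPath 0 1) = pathMod G p := by
  have : p.extend.segmentPath 0 1 = p.cast p.extend_zero p.extend_one := by
    ext θ
    simp [ContinuousMap.segmentPath, AffineMap.lineMap_apply_ring]
  rw [this, pathMod_cast]

theorem IsCompact.exists_pos_forall_dist_lt_joinedIn_ball {X : Type*} [MetricSpace X]
    [LocallyPathConnectedSpace X] {K : Set X} (hK : IsCompact K) {r : ℝ} (hr : 0 < r) :
    ∃ ε > 0, ∀ x ∈ K, ∀ z, dist x z < ε → JoinedIn (ball x r) x z := by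
  obtain ⟨ε, hε, hleb⟩ := lebesgue_number_lemma_of_metric hK
    (c := fun y => pathComponentIn (ball y (r / 2)) y) (fun y => isOpen_ball.pathComponentIn y)
    (fun x _ => mem_iUnion.2 ⟨x, mem_pathComponentIn_self (mem_ball_self (half_pos hr))⟩)
  refine ⟨ε, hε, fun x hx z hz => ?_⟩
  obtain ⟨y, hy⟩ := hleb x hx
  have hyx : JoinedIn (ball y (r / 2)) y x := hy (mem_ball_self hε)
  have hyz : JoinedIn (ball y (r / 2)) y z := hy (mem_ball'.2 hz)
  refine (hyx.symm.trans hyz).mono (ball_subset_ball' ?_)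
  linarith [mem_ball'.1 hyx.target_mem]

theorem Path.eventually_forall_dist_lt {X : Type*} [MetricSpace X] {a b : X} (p : Path a b)
    {ε : ℝ} (hε : 0 < ε) : ∀ᶠ q in 𝓝 p, ∀ t, dist (p t) (q t) < ε := by
  filter_upwards [continuous_induced_dom.tendsto p (ball_mem_nhds (p : C(unitInterval, X)) hε)]
    with q hq
  exact (ContinuousMap.dist_lt_iff hε).1 (mem_ball'.1 hq)

section Metric

variable {X : Type*} [MetricSpace X] [PathConnectedSpace X] {x₀ : X}
  (G : Subgroup (FundamentalGroup X x₀)) [G.Normal]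
  {f g : C(ℝ, X)} (γ : ∀ t, Path (f t) (g t)) {δ : ℝ}

theorem eventually_pathMod_segmentPath_mul_mul
    (hsmall : ∀ t a (ℓ : Path a a), range ℓ ⊆ ball (f t) δ → pathMod G ℓ = 1)
    (hγ : ∀ t, range (γ t) ⊆ ball (f t) (δ / 4)) (t : ℝ) :
    ∀ᶠ r in 𝓝 t,
      pathMod G (f.segmentPath t r) * pathMod G (γ r) * pathMod G (g.segmentPath r t) =
        pathMod G (γ t) := by
  have hδ : 0 < δ / 4 := pos_of_mem_ball (hγ t (γ t).source_mem_range)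
  have hgf : ∀ x, dist (g x) (f x) < δ / 4 := fun x => hγ x (γ x).target_mem_range
  obtain ⟨η, hη, hfη⟩ := Metric.continuousAt_iff.1 f.continuous.continuousAt (δ / 4) hδ
  filter_upwards [ball_mem_nhds t hη] with r hr
  have hf : ∀ x ∈ uIcc t r, dist (f x) (f t) < δ / 4 := fun x hx =>
    hfη ((dist_comm x t ▸ Real.dist_left_le_of_mem_uIcc hx).trans_lt (mem_ball'.1 hr))
  have hℓ : range (((f.segmentPath t r).trans (γ r)).trans
      ((g.segmentPath r t).trans (γ t).symm)) ⊆ ball (f t) δ := by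
    simp only [Path.trans_range, Path.symm_range, ContinuousMap.range_segmentPath,
      union_subset_iff, image_subset_iff, uIcc_comm r t]
    refine ⟨⟨fun x hx => mem_ball.2 ?_, fun z hz => mem_ball.2 ?_⟩,
      fun x hx => mem_ball.2 ?_, fun z hz => mem_ball.2 ?_⟩
    · linarith [hf x hx]
    · linarith [dist_triangle z (f r) (f t), mem_ball.1 (hγ r hz), hf r right_mem_uIcc]
    · linarith [dist_triangle (g x) (f x) (f t), hgf x, hf x hx]
    · linarith [mem_ball.1 (hγ t hz)]
  have hloop := hsmall t _ _ hℓ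
  simp only [pathMod_trans, pathMod_symm] at hloop
  rw [← mul_inv_eq_one, ← hloop]
  group

theorem pathMod_segmentPath_mul_eq
    (hsmall : ∀ t a (ℓ : Path a a), range ℓ ⊆ ball (f t) δ → pathMod G ℓ = 1)
    (hγ : ∀ t, range (γ t) ⊆ ball (f t) (δ / 4)) (s t : ℝ) :
    pathMod G (f.segmentPath s t) * pathMod G (γ t) =
      pathMod G (γ s) * pathMod G (g.segmentPath s t) := by
  set D : ℝ → FundamentalGroup X x₀ ⧸ G := fun r =>
    pathMod G (f.segmentPath s r) * pathMod G (γ r) * (pathMod G (g.segmentPath s r))⁻¹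
  have hD : IsLocallyConstant D := (IsLocallyConstant.iff_eventually_eq D).2 fun t =>
    (eventually_pathMod_segmentPath_mul_mul G γ hsmall hγ t).mono fun r hr => by
      simp only [D]
      rw [f.pathMod_segmentPath_trans G s t r, g.pathMod_segmentPath_trans G s r t, ← hr]
      group
  have hDts := hD.apply_eq_of_preconnectedSpace t s
  simp only [D, ContinuousMap.pathMod_segmentPath_self, one_mul, inv_one, mul_one] at hDts
  rwa [mul_inv_eq_iff_eq_mul] at hDts

variable [LocallyPathConnectedSpace X]

theorem isLocallyConstant_pathMod {𝒰 : Set (Set X)} (hopen : ∀ U ∈ 𝒰, IsOpen U)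
    (hcover : ⋃₀ 𝒰 = univ) (hsmall : ∀ U ∈ 𝒰, ∀ a (ℓ : Path a a), range ℓ ⊆ U → pathMod G ℓ = 1)
    {a b : X} : IsLocallyConstant (pathMod G : Path a b → FundamentalGroup X x₀ ⧸ G) := by
  refine (IsLocallyConstant.iff_eventually_eq _).2 fun p => ?_
  have hK := isCompact_range p.continuous
  obtain ⟨δ, hδ, hδ𝒰⟩ :=
    lebesgue_number_lemma_of_metric_sUnion hK hopen (hcover ▸ subset_univ _)
  obtain ⟨ε, hε, hjoin⟩ :=
    hK.exists_pos_forall_dist_lt_joinedIn_ball (by positivity : 0 < δ / 4)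
  filter_upwards [p.eventually_forall_dist_lt hε] with q hq
  have hpK : ∀ t, p.extend t ∈ range p := fun t => p.extend_range ▸ mem_range_self t
  have hloc : ∀ t a (ℓ : Path a a), range ℓ ⊆ ball (p.extend t) δ → pathMod G ℓ = 1 := by
    intro t a ℓ hℓ
    obtain ⟨U, hU, hball⟩ := hδ𝒰 _ (hpK t)
    exact hsmall U hU a ℓ (hℓ.trans hball)
  have hpq : ∀ t, JoinedIn (ball (p.extend t) (δ / 4)) (p.extend t) (q.extend t) := fun t =>
    hjoin _ (hpK t) _ (hq (projIcc 0 1 zero_le_one t))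
  set γ := fun t => (hpq t).somePath
  have hγ : ∀ t, range (γ t) ⊆ ball (p.extend t) (δ / 4) := fun t =>
    range_subset_iff.2 (hpq t).somePath_mem
  have hend : ∀ t {c}, p.extend t = c → q.extend t = c → pathMod G (γ t) = 1 := by
    intro t c hpc hqc
    rw [← pathMod_cast G (γ t) hpc.symm hqc.symm]
    refine hloc t c _ ?_
    rw [Path.cast_coe]
    exact (hγ t).trans (ball_subset_ball (by linarith))
  have key := pathMod_segmentPath_mul_eq G γ hloc hγ 0 1
  rw [hend 0 p.extend_zero q.extend_zero, hend 1 p.extend_one q.extend_one, mul_one,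
    one_mul] at key
  rw [← p.pathMod_extend_segmentPath G, ← q.pathMod_extend_segmentPath G, key]

end Metric

/-- Let `X` be a locally path-connected metric space and `G ⊴ π₁(X)` a normal subgroup.
If there is an open cover `𝒰` of `X` such that every loop contained entirely in an element
of `𝒰` represents an element of `G`, then `G` is open. -/
theorem open_of_open_cover {X : Type} [MetricSpace X] [PathConnectedSpace X]
    [LocallyPathConnectedSpace X] (x₀ : X) (G : Subgroup (FundamentalGroup X x₀)) [G.Normal]
    (𝒰 : Set (Set X)) (hopen : ∀ U ∈ 𝒰, IsOpen U) (hcover : ⋃₀ 𝒰 = Set.univ)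
    (hloops : ∀ U ∈ 𝒰, ∀ (y : X) (p : Path y y), Set.range p ⊆ U → loopInBF G p) :
    ∀ y : X, IsOpen {p : Path y y | loopInBF G p} := by
  intro y
  have hsmall : ∀ U ∈ 𝒰, ∀ a (ℓ : Path a a), range ℓ ⊆ U → pathMod G ℓ = 1 :=
    fun U hU a ℓ hℓ => (loopInBF_iff_pathMod_eq_one G ℓ).1 (hloops U hU a ℓ hℓ)
  simpa only [loopInBF_iff_pathMod_eq_one] using
    (isLocallyConstant_pathMod G hopen hcover hsmall).isOpen_fiber 1
end

section
/- Suppose ≈ is an equivalence relation on the Cantor space {0,1}^ω with the Baire property as a subset of {0,1}^ω × {0,1}^ω, such that whenever α and β differ in exactly one coordinate, α ≈ β fails. Then ≈ has exactly 2^{ℵ₀} equivalence classes. -/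
/-!
The relation `R = {(α, β) | α ≈ β}` is meagre. Otherwise, having the Baire property, it is
comeagre in a box `cylinder a n ×ˢ cylinder b n`; flipping the `n`-th coordinate of the first
factor is a homeomorphism preserving that box, so `R` and its preimage share a point, giving
`α ≈ β ≈ flip α`.

By Mycielski's theorem a meagre relation `R` on the Cantor space admits a map `f` with
`(f x, f y) ∉ R` for all `x ≠ y`: fix dense open sets `D 0 ⊇ D 1 ⊇ ⋯` avoiding `R` and build a
binary tree of cylinders in which the products of distinct nodes of level `k + 1` lie in `D k`.
Then `x ↦ ⟦f x⟧` injects `2^ℵ₀` into the quotient.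
-/
open Set Function PiNat

namespace PiNat

variable {E : ℕ → Type*}

theorem cylinder_subset_of_mem {x y : ∀ n, E n} {m n : ℕ} (hy : y ∈ cylinder x m) (hmn : m ≤ n) :
    cylinder y n ⊆ cylinder x m :=
  (cylinder_anti y hmn).trans (mem_cylinder_iff_eq.1 hy).le

variable [∀ n, TopologicalSpace (E n)] [∀ n, DiscreteTopology (E n)]

theorem exists_cylinder_subset {U : Set (∀ n, E n)} (hU : IsOpen U) {x : ∀ n, E n} (hx : x ∈ U) :
    ∃ n, cylinder x n ⊆ U := by
  obtain ⟨_, ⟨y, n, rfl⟩, hxy, hyU⟩ :=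
    (isTopologicalBasis_cylinders E).exists_subset_of_mem_open hx hU
  exact ⟨n, (mem_cylinder_iff_eq.1 hxy).trans_subset hyU⟩

theorem exists_cylinder_prod_subset {U : Set ((∀ n, E n) × (∀ n, E n))} (hU : IsOpen U)
    {p : (∀ n, E n) × (∀ n, E n)} (hp : p ∈ U) : ∃ n, cylinder p.1 n ×ˢ cylinder p.2 n ⊆ U := by
  obtain ⟨u, v, hu, hv, hpu, hpv, huv⟩ := isOpen_prod_iff.1 hU p.1 p.2 hp
  obtain ⟨m, hm⟩ := exists_cylinder_subset hu hpu
  obtain ⟨n, hn⟩ := exists_cylinder_subset hv hpv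
  exact ⟨max m n, (prod_mono ((cylinder_anti _ (le_max_left m n)).trans hm)
    ((cylinder_anti _ (le_max_right m n)).trans hn)).trans huv⟩

end PiNat

def flipAt (n : ℕ) : (ℕ → Bool) ≃ₜ (ℕ → Bool) :=
  Homeomorph.piCongrRight fun i =>
    if i = n then Equiv.boolNot.toHomeomorphOfDiscrete else .refl Bool

theorem flipAt_eq_update (n : ℕ) (x : ℕ → Bool) : flipAt n x = update x n (!x n) := by
  ext i
  rcases eq_or_ne i n with rfl | h
  · simp only [flipAt, Homeomorph.piCongrRight_apply, ↓reduceIte, update_self]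
    rfl
  · simp [flipAt, h]

theorem existsUnique_ne_flipAt (n : ℕ) (x : ℕ → Bool) : ∃! m, x m ≠ flipAt n x m := by
  refine ⟨n, by simp [flipAt_eq_update], fun m hm => ?_⟩
  by_contra h
  simp [flipAt_eq_update, update_of_ne h] at hm

theorem flipAt_mem_cylinder (n : ℕ) (x : ℕ → Bool) : flipAt n x ∈ cylinder x n := by
  rw [flipAt_eq_update]
  exact update_mem_cylinder x n _

section Baire

variable {X : Type*} [TopologicalSpace X]

theorem BaireMeasurableSet.exists_isOpen_eventually_mem {s : Set X} (hs : BaireMeasurableSet s)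
    (hns : ¬IsMeagre s) : ∃ U, IsOpen U ∧ U.Nonempty ∧ ∀ᶠ x in residual X, x ∈ U → x ∈ s := by
  obtain ⟨U, hUo, hsU⟩ := hs.residualEq_isOpen
  refine ⟨U, hUo, nonempty_iff_ne_empty.2 fun hU => hns ?_, hsU.mem_iff.mono fun x hx => hx.2⟩
  subst hU
  exact hsU.mem_iff.mono fun x hx => hx.not.2 (notMem_empty x)

theorem exists_mem_and_apply_mem_of_eventually [BaireSpace X] {s U : Set X} (hU : IsOpen U)
    (hne : U.Nonempty) (hs : ∀ᶠ x in residual X, x ∈ U → x ∈ s) (φ : X ≃ₜ X)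
    (hφ : MapsTo φ U U) : ∃ x, x ∈ s ∧ φ x ∈ s := by
  have hφs : ∀ᶠ x in residual X, φ x ∈ U → φ x ∈ s :=
    tendsto_residual_of_isOpenMap φ.continuous φ.isOpenMap |>.eventually hs
  obtain ⟨x, hxU, hx, hφx⟩ :=
    (dense_of_mem_residual (hs.and hφs)).inter_open_nonempty U hU hne
  exact ⟨x, hx hxU, hφx (hφ hxU)⟩

theorem IsMeagre.exists_antitone_isOpen_dense {s : Set X} (hs : IsMeagre s) :
    ∃ D : ℕ → Set X, Antitone D ∧ (∀ n, IsOpen (D n)) ∧ (∀ n, Dense (D n)) ∧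
      Disjoint s (⋂ n, D n) := by
  obtain ⟨S, hSo, hSd, hSc, hSs⟩ := mem_residual_iff.1 hs
  obtain ⟨U, hU⟩ := (hSc.insert univ).exists_eq_range (insert_nonempty _ _)
  have hUod : ∀ n, IsOpen (U n) ∧ Dense (U n) := by
    intro n
    rcases (hU ▸ mem_range_self n : U n ∈ insert univ S) with h | h
    · exact h ▸ ⟨isOpen_univ, dense_univ⟩
    · exact ⟨hSo _ h, hSd _ h⟩
  refine ⟨fun n => ⋂₀ (U '' Iic n),
    fun m n hmn => sInter_subset_sInter (image_mono (Iic_subset_Iic.2 hmn)),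
    fun n => ((finite_Iic n).image U).isOpen_sInter (forall_mem_image.2 fun i _ => (hUod i).1),
    fun n => ((finite_Iic n).image U).dense_sInter (forall_mem_image.2 fun i _ => (hUod i).1)
      (forall_mem_image.2 fun i _ => (hUod i).2), disjoint_compl_right.mono_right ?_⟩
  calc ⋂ n, ⋂₀ (U '' Iic n) ⊆ ⋂ n, U n :=
        iInter_mono fun n => sInter_subset_of_mem (mem_image_of_mem U self_mem_Iic)
    _ = ⋂₀ insert univ S := by rw [hU, sInter_range]
    _ ⊆ sᶜ := by rw [sInter_insert, univ_inter]; exact hSs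

end Baire

section Mycielski

variable {E : ℕ → Type*} [∀ n, TopologicalSpace (E n)] [∀ n, DiscreteTopology (E n)]

theorem Dense.exists_cylinder_prod_subset {D : Set ((∀ n, E n) × (∀ n, E n))} (hDd : Dense D)
    (hDo : IsOpen D) (a b : ∀ n, E n) (n : ℕ) :
    ∃ m, n ≤ m ∧ ∃ a' ∈ cylinder a n, ∃ b' ∈ cylinder b n, cylinder a' m ×ˢ cylinder b' m ⊆ D := by
  obtain ⟨z, ⟨hza, hzb⟩, hzD⟩ := hDd.inter_open_nonempty _
    ((isOpen_cylinder E a n).prod (isOpen_cylinder E b n))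
    ⟨(a, b), self_mem_cylinder a n, self_mem_cylinder b n⟩
  obtain ⟨m, hm⟩ := PiNat.exists_cylinder_prod_subset hDo hzD
  exact ⟨max m n, le_max_right m n, z.1, hza, z.2, hzb,
    (prod_mono (cylinder_anti _ (le_max_left m n)) (cylinder_anti _ (le_max_left m n))).trans hm⟩

theorem Dense.exists_pairwise_cylinder_prod_subset {D : Set ((∀ n, E n) × (∀ n, E n))}
    (hDd : Dense D) (hDo : IsOpen D) {ι : Type*} [Finite ι] (a : ι → ∀ n, E n) (n : ℕ) :
    ∃ m, n ≤ m ∧ ∃ b : ι → ∀ n, E n, (∀ i, b i ∈ cylinder (a i) n) ∧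
      Pairwise fun i j => cylinder (b i) m ×ˢ cylinder (b j) m ⊆ D := by
  classical
  have := Fintype.ofFinite ι
  suffices h : ∀ P : Finset (ι × ι), ∃ m, n ≤ m ∧ ∃ b : ι → ∀ n, E n,
      (∀ i, b i ∈ cylinder (a i) n) ∧
        ∀ p ∈ P, p.1 ≠ p.2 → cylinder (b p.1) m ×ˢ cylinder (b p.2) m ⊆ D by
    obtain ⟨m, hnm, b, hb, hbD⟩ := h Finset.univ
    exact ⟨m, hnm, b, hb, fun i j hij => hbD (i, j) (Finset.mem_univ _) hij⟩
  intro P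
  induction P using Finset.induction_on with
  | empty => exact ⟨n, le_rfl, a, fun i => self_mem_cylinder _ _, by simp⟩
  | insert p P _ ih =>
    obtain ⟨m, hnm, b, hb, hbD⟩ := ih
    by_cases hp : p.1 = p.2
    · refine ⟨m, hnm, b, hb, fun q hq hq' => ?_⟩
      rcases Finset.mem_insert.1 hq with rfl | hq
      exacts [absurd hp hq', hbD q hq hq']
    obtain ⟨m', hmm', x, hx, y, hy, hxy⟩ := hDd.exists_cylinder_prod_subset hDo (b p.1) (b p.2) m
    set b' := update (update b p.1 x) p.2 y with hb'_def
    have hb' : ∀ i, b' i ∈ cylinder (b i) m := by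
      intro i
      simp only [b', update_apply]
      split_ifs with h2 h1
      exacts [h2 ▸ hy, h1 ▸ hx, self_mem_cylinder _ _]
    refine ⟨m', hnm.trans hmm', b', fun i => cylinder_subset_of_mem (hb i) hnm (hb' i),
      fun q hq hq' => ?_⟩
    rcases Finset.mem_insert.1 hq with rfl | hq
    · rwa [hb'_def, update_self, update_of_ne hp, update_self]
    · exact (prod_mono (cylinder_subset_of_mem (hb' _) hmm')
        (cylinder_subset_of_mem (hb' _) hmm')).trans (hbD q hq hq')

/-- A level `k` of the scheme is a pair `(ℓ, c)`: the node `s : Fin k → Bool` carries the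
cylinder `cylinder (c s) ℓ`. -/
def IsSeparatedRefinement (D : Set ((∀ n, E n) × (∀ n, E n))) {k : ℕ}
    (p : ℕ × ((Fin k → Bool) → ∀ n, E n)) (q : ℕ × ((Fin (k + 1) → Bool) → ∀ n, E n)) : Prop :=
  p.1 < q.1 ∧ (∀ s, q.2 s ∈ cylinder (p.2 (Fin.init s)) p.1) ∧
    Pairwise fun s t => cylinder (q.2 s) q.1 ×ˢ cylinder (q.2 t) q.1 ⊆ D

theorem Dense.exists_isSeparatedRefinement {D : Set ((∀ n, E n) × (∀ n, E n))} (hDd : Dense D)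
    (hDo : IsOpen D) {k : ℕ} (p : ℕ × ((Fin k → Bool) → ∀ n, E n)) :
    ∃ q, IsSeparatedRefinement D p q := by
  obtain ⟨m, hm, b, hb, hbD⟩ :=
    hDd.exists_pairwise_cylinder_prod_subset hDo
      (fun s : Fin (k + 1) → Bool => p.2 (Fin.init s)) (p.1 + 1)
  exact ⟨(m, b), hm, fun s => cylinder_anti _ p.1.le_succ (hb s), hbD⟩

variable [∀ n, Nonempty (E n)] (D : ℕ → Set ((∀ n, E n) × (∀ n, E n)))
  (hDd : ∀ n, Dense (D n)) (hDo : ∀ n, IsOpen (D n))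

noncomputable def mycielskiScheme : (k : ℕ) → ℕ × ((Fin k → Bool) → ∀ n, E n)
  | 0 => (0, fun _ => Classical.arbitrary _)
  | k + 1 => Classical.choose ((hDd k).exists_isSeparatedRefinement (hDo k) (mycielskiScheme k))

theorem mycielskiScheme_succ (k : ℕ) :
    IsSeparatedRefinement (D k) (mycielskiScheme D hDd hDo k)
      (mycielskiScheme D hDd hDo (k + 1)) :=
  Classical.choose_spec ((hDd k).exists_isSeparatedRefinement (hDo k) _)

theorem le_mycielskiScheme_fst (k : ℕ) : k ≤ (mycielskiScheme D hDd hDo k).1 := by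
  induction k with
  | zero => exact le_rfl
  | succ k ih => exact ih.trans_lt (mycielskiScheme_succ D hDd hDo k).1

def mycielskiCylinder (x : ℕ → Bool) (k : ℕ) : Set (∀ n, E n) :=
  cylinder ((mycielskiScheme D hDd hDo k).2 fun i : Fin k => x i) (mycielskiScheme D hDd hDo k).1

theorem antitone_mycielskiCylinder (x : ℕ → Bool) : Antitone (mycielskiCylinder D hDd hDo x) :=
  antitone_nat_of_succ_le fun k => cylinder_subset_of_mem
    ((mycielskiScheme_succ D hDd hDo k).2.1 fun i => x i) (mycielskiScheme_succ D hDd hDo k).1.le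

/-- Coordinate `i` is read off level `i + 1`, whose cylinders have length `> i`. -/
noncomputable def mycielskiMap (x : ℕ → Bool) : ∀ n, E n :=
  fun i => (mycielskiScheme D hDd hDo (i + 1)).2 (fun j : Fin (i + 1) => x j) i

theorem mycielskiMap_mem (x : ℕ → Bool) (k : ℕ) :
    mycielskiMap D hDd hDo x ∈ mycielskiCylinder D hDd hDo x k := by
  intro i hi
  set l := max k (i + 1)
  have hc : ∀ j ≤ l, (mycielskiScheme D hDd hDo l).2 (fun i : Fin l => x i) ∈
      mycielskiCylinder D hDd hDo x j :=
    fun j hj => antitone_mycielskiCylinder D hDd hDo x hj (self_mem_cylinder _ _)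
  exact (hc (i + 1) (le_max_right _ _) i (le_mycielskiScheme_fst D hDd hDo (i + 1))).symm.trans
    (hc k (le_max_left _ _) i hi)

theorem mycielskiMap_mem_of_ne (hD : Antitone D) {x y : ℕ → Bool} (hxy : x ≠ y) (j : ℕ) :
    (mycielskiMap D hDd hDo x, mycielskiMap D hDd hDo y) ∈ D j := by
  obtain ⟨n, hn⟩ := Function.ne_iff.1 hxy
  set k := max j n
  have hne : (fun i : Fin (k + 1) => x i) ≠ fun i : Fin (k + 1) => y i :=
    fun h => hn (congrFun h ⟨n, Nat.lt_succ_of_le (le_max_right j n)⟩)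
  exact hD (le_max_left j n) <| (mycielskiScheme_succ D hDd hDo k).2.2 hne
    ⟨mycielskiMap_mem D hDd hDo x (k + 1), mycielskiMap_mem D hDd hDo y (k + 1)⟩

end Mycielski

theorem IsMeagre.exists_pairwise_not_mem {E : ℕ → Type*} [∀ n, TopologicalSpace (E n)]
    [∀ n, DiscreteTopology (E n)] [∀ n, Nonempty (E n)] {R : Set ((∀ n, E n) × (∀ n, E n))}
    (hR : IsMeagre R) : ∃ f : (ℕ → Bool) → ∀ n, E n, Pairwise fun x y => (f x, f y) ∉ R := by
  obtain ⟨D, hDa, hDo, hDd, hRD⟩ := hR.exists_antitone_isOpen_dense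
  exact ⟨mycielskiMap D hDd hDo, fun x y hxy hxyR =>
    hRD.notMem_of_mem_left hxyR (mem_iInter.2 (mycielskiMap_mem_of_ne D hDd hDo hDa hxy))⟩

theorem isMeagre_setOf_of_not_rel_flipAt {r : (ℕ → Bool) → (ℕ → Bool) → Prop}
    (hr : Equivalence r)
    (hBP : BaireMeasurableSet {p : (ℕ → Bool) × (ℕ → Bool) | r p.1 p.2})
    (hflip : ∀ n x, ¬r x (flipAt n x)) : IsMeagre {p : (ℕ → Bool) × (ℕ → Bool) | r p.1 p.2} := by
  by_contra hns
  obtain ⟨U, hUo, ⟨p, hp⟩, hU⟩ := hBP.exists_isOpen_eventually_mem hns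
  obtain ⟨n, hn⟩ := exists_cylinder_prod_subset hUo hp
  have hφ : MapsTo ((flipAt n).prodCongr (.refl _)) (cylinder p.1 n ×ˢ cylinder p.2 n)
      (cylinder p.1 n ×ˢ cylinder p.2 n) := fun q hq =>
    ⟨cylinder_subset_of_mem hq.1 le_rfl (flipAt_mem_cylinder n q.1), hq.2⟩
  obtain ⟨q, hq, hφq⟩ := exists_mem_and_apply_mem_of_eventually
    ((isOpen_cylinder _ _ n).prod (isOpen_cylinder _ _ n))
    ⟨p, self_mem_cylinder _ n, self_mem_cylinder _ n⟩ (hU.mono fun x hx hxn => hx (hn hxn)) _ hφ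
  exact hflip n q.1 (hr.trans hq (hr.symm hφq))

/-- Suppose `≈` is an equivalence relation on the Cantor space `{0,1}^ω` with the Baire
property as a subset of the square, such that sequences differing in exactly one
coordinate are never equivalent. Then `≈` has exactly `2^ℵ₀` equivalence classes. -/
theorem pawlikowski_lemma (r : (ℕ → Bool) → (ℕ → Bool) → Prop) (hequiv : Equivalence r)
    (hBP : BaireMeasurableSet {p : (ℕ → Bool) × (ℕ → Bool) | r p.1 p.2})
    (hdiff : ∀ α β : ℕ → Bool, (∃! n : ℕ, α n ≠ β n) → ¬ r α β) :
    Cardinal.mk (Quotient (Setoid.mk r hequiv)) = Cardinal.continuum := by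
  have hmeagre := isMeagre_setOf_of_not_rel_flipAt hequiv hBP fun n x =>
    hdiff x _ (existsUnique_ne_flipAt n x)
  obtain ⟨f, hf⟩ := hmeagre.exists_pairwise_not_mem
  have hcard : Cardinal.mk (ℕ → Bool) = Cardinal.continuum := by simp
  refine le_antisymm (hcard ▸ Cardinal.mk_le_of_surjective Quotient.mk_surjective) ?_
  refine hcard ▸ Cardinal.mk_le_of_injective (f := fun x => Quotient.mk _ (f x)) fun x y hxy => ?_
  by_contra hne
  exact hf hne (Quotient.exact hxy)
end

section
/- Every element of the infinite product ∏_{ω} A₅ of copies of the alternating group A₅ is a product of exactly two conjugates of the element g whose every coordinate is the 3-cycle (1 2 3). Consequently, the normal closure of g in ∏_{ω} A₅ is the whole group, so ∏_{ω} A₅ is not a comonster group. -/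
/-!
All 3-cycles of A₅ are conjugate and every element of A₅ is a product of two 3-cycles, so every
element of A₅ is a product of two conjugates of (0 1 2). Conjugation in a product is
coordinatewise, so choosing the two conjugators coordinatewise does the same in `ℕ → A₅` for the
constant element `g`; hence `g` alone normally generates the product.
-/

section TwoConjugates

variable {G : Type*} [Group G]

theorem Subgroup.normalClosure_singleton_eq_top_of_forall_eq_conj_mul_conj {x : G}
    (hx : ∀ y : G, ∃ a b : G, y = (a * x * a⁻¹) * (b * x * b⁻¹)) :
    Subgroup.normalClosure {x} = ⊤ := by
  refine eq_top_iff.mpr fun y _ => ?_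
  obtain ⟨a, b, rfl⟩ := hx y
  have hmem : x ∈ Subgroup.normalClosure {x} := Subgroup.subset_normalClosure rfl
  exact mul_mem (Subgroup.normalClosure_normal.conj_mem x hmem a)
    (Subgroup.normalClosure_normal.conj_mem x hmem b)

theorem Pi.exists_eq_conj_mul_conj_const {ι : Type*} {x : G}
    (hx : ∀ y : G, ∃ a b : G, y = (a * x * a⁻¹) * (b * x * b⁻¹)) (y : ι → G) :
    ∃ a b : ι → G, y = (a * Function.const ι x * a⁻¹) * (b * Function.const ι x * b⁻¹) := by
  choose a b hab using fun i => hx (y i)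
  exact ⟨a, b, funext hab⟩

end TwoConjugates

theorem alternatingGroup.threeCycle_mem : c[(0 : Fin 5), 1, 2] ∈ alternatingGroup (Fin 5) :=
  Equiv.Perm.mem_alternatingGroup.mpr (by decide)

set_option maxRecDepth 10000 in
theorem alternatingGroup.exists_eq_conj_mul_conj_threeCycle (y : alternatingGroup (Fin 5)) :
    ∃ a b : alternatingGroup (Fin 5),
      y = (a * ⟨c[0, 1, 2], threeCycle_mem⟩ * a⁻¹) * (b * ⟨c[0, 1, 2], threeCycle_mem⟩ * b⁻¹) := by
  revert y
  decide

/-- Every element of `∏_ω A₅` is a product of exactly two conjugates of the element `g`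
all of whose coordinates are the 3-cycle `(0 1 2)`; consequently the normal closure of
`g` is the whole group, and `∏_ω A₅` is not a comonster group (it is the normal closure
of a finite subset). -/
theorem prod_A5_not_comonster
    (g : ∀ _ : ℕ, alternatingGroup (Fin 5))
    (hg : g = fun _ => (⟨c[(0 : Fin 5), 1, 2], by first | (simp [Equiv.Perm.mem_alternatingGroup]; decide) | decide⟩ : alternatingGroup (Fin 5))) :
    (∀ h : ∀ _ : ℕ, alternatingGroup (Fin 5),
      ∃ a b : ∀ _ : ℕ, alternatingGroup (Fin 5),
        h = (a * g * a⁻¹) * (b * g * b⁻¹)) ∧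
    Subgroup.normalClosure {g} = ⊤ ∧
    ¬ (∀ S : Set (∀ _ : ℕ, alternatingGroup (Fin 5)),
        S.Finite → Subgroup.normalClosure S ≠ ⊤) := by
  subst hg
  have two_conj := Pi.exists_eq_conj_mul_conj_const
    alternatingGroup.exists_eq_conj_mul_conj_threeCycle (ι := ℕ)
  have closure_eq_top :=
    Subgroup.normalClosure_singleton_eq_top_of_forall_eq_conj_mul_conj two_conj
  exact ⟨two_conj, closure_eq_top, fun h => h _ (Set.finite_singleton _) closure_eq_top⟩
end

section
/- Let X be a Polish space with basepoint x, and let 𝒫 be a pointclass containing the closed sets and closed under continuous images between Polish spaces, finite products, finite intersections, and countable unions. If K ⊆ L_x is a set of loops in 𝒫, then the subgroup ⟨[K]⟩ of π₁(X,x) generated by the homotopy classes of loops in K is a 𝒫-subgroup (i.e., the set of loops representing its elements is in 𝒫). -/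
/-!
With `S = [K] ∪ [K]⁻¹`, the subgroup generated by `[K]` is `⋃ₙ Sⁿ`, and `Sⁿ` is the set of
classes of the concatenations of `n` loops from `K ∪ K⁻¹`, a continuous image of a finite
product of sets in `𝒫`. The loops representing `Sⁿ` are those homotopic to such a
concatenation, i.e. a projection of the homotopy relation intersected with a product; and the
homotopy relation is the projection of the closed set of triples `(H, l₀, l₁)` with `H` a
homotopy from `l₀` to `l₁`.
-/

open Topology unitInterval Pointwise

theorem Set.union_eq_iUnion_ite {α : Type*} (s t : Set α) :
    s ∪ t = ⋃ n : ℕ, if n = 0 then s else t := by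
  ext a
  simp only [Set.mem_union, Set.mem_iUnion]
  constructor
  · rintro (h | h)
    exacts [⟨0, h⟩, ⟨1, h⟩]
  · rintro ⟨n, h⟩
    split_ifs at h
    exacts [.inl h, .inr h]

theorem Submonoid.coe_closure_eq_iUnion_pow {M : Type*} [Monoid M] (s : Set M) :
    (closure s : Set M) = ⋃ n : ℕ, s ^ n := by
  refine subset_antisymm (fun g hg => ?_) (Set.iUnion_subset fun n => ?_)
  · induction hg using closure_induction with
    | mem g hg => exact Set.mem_iUnion.2 ⟨1, by rwa [pow_one]⟩
    | one => exact Set.mem_iUnion.2 ⟨0, by rw [pow_zero]; rfl⟩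
    | mul g h _ _ hg hh =>
      obtain ⟨m, hg⟩ := Set.mem_iUnion.1 hg
      obtain ⟨n, hh⟩ := Set.mem_iUnion.1 hh
      exact Set.mem_iUnion.2 ⟨m + n, by rw [pow_add]; exact Set.mul_mem_mul hg hh⟩
  · induction n with
    | zero => simp
    | succ n ih =>
      rw [pow_succ]
      rintro _ ⟨g, hg, h, hh, rfl⟩
      exact mul_mem (ih hg) (subset_closure hh)

theorem Subgroup.coe_closure_eq_iUnion_pow {G : Type*} [Group G] (s : Set G) :
    (closure s : Set G) = ⋃ n : ℕ, (s ∪ s⁻¹) ^ n := by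
  rw [← Submonoid.coe_closure_eq_iUnion_pow, ← closure_toSubmonoid]
  rfl

instance ContinuousMap.polishSpace {α β : Type*} [TopologicalSpace α] [CompactSpace α]
    [SecondCountableTopology α] [LocallyCompactSpace α] [TopologicalSpace β] [PolishSpace β] :
    PolishSpace C(α, β) := by
  let _ := TopologicalSpace.upgradeIsCompletelyMetrizable β
  have : CompleteSpace C(α, β) :=
    ((isUniformEmbedding_equivBoundedOfCompact α β).toIsUniformInducing.completeSpace_congr
      (equivBoundedOfCompact α β).surjective).mpr inferInstance
  infer_instance

namespace Path

variable {X : Type*} [TopologicalSpace X] {x y : X}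

theorem range_toContinuousMap :
    Set.range (toContinuousMap : Path x y → C(I, X)) = {f | f 0 = x ∧ f 1 = y} := by
  ext f
  constructor
  · rintro ⟨γ, rfl⟩
    exact ⟨γ.source, γ.target⟩
  · rintro ⟨h0, h1⟩
    exact ⟨⟨f, h0, h1⟩, rfl⟩

theorem isClosedEmbedding_toContinuousMap [T2Space X] :
    IsClosedEmbedding (toContinuousMap : Path x y → C(I, X)) := by
  refine ⟨⟨⟨rfl⟩, fun _ _ h => Path.ext (congrArg (fun f : C(I, X) => ⇑f) h)⟩, ?_⟩
  rw [range_toContinuousMap]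
  exact (isClosed_eq (continuous_eval_const 0) continuous_const).inter
    (isClosed_eq (continuous_eval_const 1) continuous_const)

instance polishSpace [PolishSpace X] : PolishSpace (Path x y) :=
  isClosedEmbedding_toContinuousMap.polishSpace

/-- Triples `(H, p, q)` with `H` a homotopy rel endpoints from `p` to `q`; the homotopy
parameter is the first coordinate of `I × I`. -/
def homotopyTriples (x y : X) : Set (C(I × I, X) × Path x y × Path x y) :=
  {z | ∀ t, z.1 (0, t) = z.2.1 t ∧ z.1 (1, t) = z.2.2 t ∧ z.1 (t, 0) = x ∧ z.1 (t, 1) = y}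

theorem isClosed_homotopyTriples [T2Space X] : IsClosed (homotopyTriples x y) := by
  simp only [homotopyTriples, Set.ofPred_forall, Set.ofPred_and]
  exact isClosed_iInter fun t => (isClosed_eq (by fun_prop) (by fun_prop)).inter <|
    (isClosed_eq (by fun_prop) (by fun_prop)).inter <|
    (isClosed_eq (by fun_prop) (by fun_prop)).inter (isClosed_eq (by fun_prop) (by fun_prop))

theorem setOf_homotopic_eq_image_homotopyTriples :
    {pq : Path x y × Path x y | pq.1.Homotopic pq.2} = Prod.snd '' homotopyTriples x y := by
  ext ⟨p, q⟩
  constructor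
  · rintro ⟨H⟩
    refine ⟨(H.toContinuousMap, p, q), fun t => ⟨H.map_zero_left t, H.map_one_left t, ?_, ?_⟩, rfl⟩
    · exact (H.eq_fst t (.inl rfl)).trans p.source
    · exact (H.eq_fst t (.inr rfl)).trans p.target
  · rintro ⟨⟨H, p, q⟩, hH, h⟩
    obtain ⟨rfl, rfl⟩ := Prod.mk.inj h
    refine ⟨⟨⟨H, fun t => (hH t).1, fun t => (hH t).2.1⟩, ?_⟩⟩
    rintro s t (rfl | rfl)
    · exact (hH s).2.2.1.trans p.source.symm
    · exact (hH s).2.2.2.trans p.target.symm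

end Path

section Loops

variable {X : Type*} [TopologicalSpace X] {x : X}

def loopClass (p : Path x x) : FundamentalGroup X x := FundamentalGroup.fromPath ⟦p⟧

theorem loopClass_refl : loopClass (Path.refl x) = 1 := rfl

theorem loopClass_trans (p q : Path x x) : loopClass (p.trans q) = loopClass q * loopClass p :=
  rfl

theorem loopClass_eq_iff {p q : Path x x} : loopClass p = loopClass q ↔ p.Homotopic q :=
  Quotient.eq

theorem image_loopClass_symm (A : Set (Path x x)) :
    loopClass '' (Path.symm '' A) = (loopClass '' A)⁻¹ := by
  rw [← Set.image_inv_eq_inv, Set.image_image, Set.image_image]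
  rfl

theorem image_loopClass_trans (A B : Set (Path x x)) :
    loopClass '' ((fun pq : Path x x × Path x x => pq.1.trans pq.2) '' A ×ˢ B) =
      loopClass '' B * loopClass '' A := by
  rw [Set.image_image, ← Set.image2_mul, Set.image2_image_left, Set.image2_image_right,
    Set.image2_swap, ← Set.image_uncurry_prod]
  rfl

def loopWords (T : Set (Path x x)) : ℕ → Set (Path x x)
  | 0 => {Path.refl x}
  | n + 1 => (fun pq : Path x x × Path x x => pq.1.trans pq.2) '' T ×ˢ loopWords T n

theorem image_loopClass_loopWords (T : Set (Path x x)) (n : ℕ) :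
    loopClass '' loopWords T n = (loopClass '' T) ^ n := by
  induction n with
  | zero => rw [loopWords, Set.image_singleton, loopClass_refl, pow_zero, Set.singleton_one]
  | succ n ih => rw [loopWords, image_loopClass_trans, ih, pow_succ]

theorem preimage_loopClass_image (A : Set (Path x x)) :
    loopClass ⁻¹' (loopClass '' A) =
      Prod.fst '' ({pq : Path x x × Path x x | pq.1.Homotopic pq.2} ∩ Set.univ ×ˢ A) := by
  ext p
  constructor
  · rintro ⟨q, hq, h⟩
    exact ⟨(p, q), ⟨loopClass_eq_iff.1 h.symm, Set.mem_univ p, hq⟩, rfl⟩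
  · rintro ⟨⟨p, q⟩, ⟨h, -, hq⟩, rfl⟩
    exact ⟨q, hq, (loopClass_eq_iff.2 h).symm⟩

theorem preimage_loopClass_closure (K : Set (Path x x)) :
    loopClass ⁻¹' (Subgroup.closure (loopClass '' K)) =
      ⋃ n : ℕ, loopClass ⁻¹' (loopClass '' loopWords (K ∪ Path.symm '' K) n) := by
  simp only [Subgroup.coe_closure_eq_iUnion_pow, Set.preimage_iUnion, image_loopClass_loopWords,
    Set.image_union, image_loopClass_symm]

end Loops

theorem generated_subgroup_mem_pointclass_general
    (P : (Z : Type) → [inst : TopologicalSpace Z] → Set (Set Z))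
    (hclosed : ∀ (Z : Type) [TopologicalSpace Z] (C : Set Z), IsClosed C → C ∈ P Z)
    (himage : ∀ (Z W : Type) [TopologicalSpace Z] [PolishSpace Z]
      [TopologicalSpace W] [PolishSpace W] (f : Z → W),
      Continuous f → ∀ S ∈ P Z, f '' S ∈ P W)
    (hprod : ∀ (Z W : Type) [TopologicalSpace Z] [TopologicalSpace W],
      ∀ S ∈ P Z, ∀ T ∈ P W, S ×ˢ T ∈ P (Z × W))
    (hinter : ∀ (Z : Type) [TopologicalSpace Z], ∀ S ∈ P Z, ∀ T ∈ P Z, S ∩ T ∈ P Z)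
    (hunion : ∀ (Z : Type) [TopologicalSpace Z] (S : ℕ → Set Z),
      (∀ n, S n ∈ P Z) → (⋃ n, S n) ∈ P Z)
    {X : Type} [MetricSpace X] [PolishSpace X] (x : X)
    (K : Set (Path x x)) (hK : K ∈ P (Path x x)) :
    {p : Path x x |
      FundamentalGroup.fromPath (X := TopCat.of X) (⟦p⟧ : Path.Homotopic.Quotient x x) ∈
        Subgroup.closure {γ : FundamentalGroup X x | ∃ q ∈ K,
          γ = FundamentalGroup.fromPath (X := TopCat.of X)
            (⟦q⟧ : Path.Homotopic.Quotient x x)}} ∈ P (Path x x) := by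
  have hgens : {γ : FundamentalGroup X x | ∃ q ∈ K, γ = FundamentalGroup.fromPath
      (X := TopCat.of X) (⟦q⟧ : Path.Homotopic.Quotient x x)} = loopClass '' K := by
    ext γ
    exact exists_congr fun q => and_congr_right fun _ => eq_comm
  have hletters : K ∪ Path.symm '' K ∈ P (Path x x) := by
    rw [Set.union_eq_iUnion_ite]
    refine hunion _ _ fun n => ?_
    split_ifs
    exacts [hK, himage _ _ _ Path.continuous_symm K hK]
  have hwords (n : ℕ) : loopWords (K ∪ Path.symm '' K) n ∈ P (Path x x) := by
    induction n with
    | zero => exact hclosed _ _ isClosed_singleton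
    | succ n ih => exact himage _ _ _ Path.continuous_trans _ (hprod _ _ _ hletters _ ih)
  have hhomotopic : {pq : Path x x × Path x x | pq.1.Homotopic pq.2} ∈ P _ := by
    rw [Path.setOf_homotopic_eq_image_homotopyTriples]
    exact himage _ _ _ continuous_snd _ (hclosed _ _ Path.isClosed_homotopyTriples)
  rw [hgens]
  change loopClass ⁻¹' (Subgroup.closure (loopClass '' K) : Set (FundamentalGroup X x)) ∈ _
  rw [preimage_loopClass_closure]
  refine hunion _ _ fun n => ?_
  rw [preimage_loopClass_image]
  exact himage _ _ _ continuous_fst _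
    (hinter _ _ hhomotopic _ (hprod _ _ _ (hclosed _ _ isClosed_univ) _ (hwords n)))

/-- Let `X` be a Polish space with basepoint `x` and `𝒫` a pointclass containing the
closed sets and closed under continuous images between Polish spaces, finite products,
finite intersections, and countable unions.  If `K ⊆ L_x` is a set of loops in `𝒫`, then
the subgroup `⟨[K]⟩` of `π₁(X, x)` generated by the homotopy classes of loops in `K` is
a `𝒫`-subgroup: the set of loops representing its elements is in `𝒫`. -/
theorem generated_subgroup_mem_pointclass
    (P : (Z : Type) → [inst : TopologicalSpace Z] → Set (Set Z))
    (hclosed : ∀ (Z : Type) [TopologicalSpace Z] (C : Set Z), IsClosed C → C ∈ P Z)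
    (himage : ∀ (Z W : Type) [TopologicalSpace Z] [PolishSpace Z]
      [TopologicalSpace W] [PolishSpace W] (f : Z → W),
      Continuous f → ∀ S ∈ P Z, f '' S ∈ P W)
    (hprod : ∀ (Z W : Type) [TopologicalSpace Z] [TopologicalSpace W],
      ∀ S ∈ P Z, ∀ T ∈ P W, S ×ˢ T ∈ P (Z × W))
    (hinter : ∀ (Z : Type) [TopologicalSpace Z], ∀ S ∈ P Z, ∀ T ∈ P Z, S ∩ T ∈ P Z)
    (hunion : ∀ (Z : Type) [TopologicalSpace Z] (S : ℕ → Set Z),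
      (∀ n, S n ∈ P Z) → (⋃ n, S n) ∈ P Z)
    {X : Type} [MetricSpace X] [PolishSpace X] [PathConnectedSpace X] (x : X)
    (K : Set (Path x x)) (hK : K ∈ P (Path x x)) :
    {p : Path x x |
      FundamentalGroup.fromPath (X := TopCat.of X) (⟦p⟧ : Path.Homotopic.Quotient x x) ∈
        Subgroup.closure {γ : FundamentalGroup X x | ∃ q ∈ K,
          γ = FundamentalGroup.fromPath (X := TopCat.of X)
            (⟦q⟧ : Path.Homotopic.Quotient x x)}} ∈ P (Path x x) :=
  generated_subgroup_mem_pointclass_general P hclosed himage hprod hinter hunion x K hK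
end

section
/- Let X be a locally path-connected metric space that is κ-Lindelöf, and let G be a noncommutatively slender (n-slender) group. Then the image of any homomorphism φ : π₁(X) → G has cardinality at most κ. -/
/-! The loops representing a given element of the image of `φ` form a coset of the open kernel,
so `p ↦ φ [p]` is locally constant on the loop space and its range is already the image of any
dense set of loops. The loop space, as a subspace of `C(I, X)` with the sup metric, has a dense
subset of cardinality at most `κ`: up to a given scale, a continuous map on a compact space is
determined by a modulus of uniform continuity together with approximations, from a dense subset
of `X`, of its values on a finite net. -/

open FundamentalGroup

attribute [local instance] Path.Homotopic.setoid

/-- A group `G` is noncommutatively slender (n-slender), via the alternative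
characterization: for every locally path-connected (path-connected) metric space `Y`,
every homomorphism `π₁(Y) → G` has open kernel (the set of representing loops is open in
the loop space with the sup metric). -/
def IsNSlender (G : Type) [Group G] : Prop :=
  ∀ (Y : Type) [MetricSpace Y] [PathConnectedSpace Y] [LocallyPathConnectedSpace Y]
    (y : Y) (φ : FundamentalGroup Y y →* G),
    IsOpen {p : Path y y |
      φ (FundamentalGroup.fromPath (X := TopCat.of Y)
        (⟦p⟧ : Path.Homotopic.Quotient y y)) = 1}

open Cardinal Set Topology

universe u

theorem Cardinal.mk_sigma_nat_le {κ : Cardinal.{u}} (hκ : ℵ₀ ≤ κ) {A : ℕ → Type u}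
    (hA : ∀ n, #(A n) ≤ κ) : #(Σ n, A n) ≤ κ :=
  calc #(Σ n, A n) ≤ lift.{u} #ℕ * ⨆ n, #(A n) := by
        rw [mk_sigma]; exact sum_le_lift_mk_mul_iSup _
    _ ≤ ℵ₀ * κ := mul_le_mul' (by simp) (ciSup_le' hA)
    _ = κ := aleph0_mul_eq hκ

theorem Cardinal.mk_arrow_le_of_finite {κ : Cardinal.{u}} (hκ : ℵ₀ ≤ κ) {α β : Type u}
    [Finite α] (hβ : #β ≤ κ) : #(α → β) ≤ κ :=
  calc #(α → β) = #β ^ #α := by rw [mk_arrow, lift_id, lift_id]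
    _ ≤ κ ^ #α := power_le_power_right hβ
    _ ≤ κ := pow_le hκ (lt_aleph0_of_finite α)

-- The fibres of `c` cover `M` by at most `κ` sets of diameter `< ε`; unlike covers by balls,
-- this notion passes to subspaces.
def HasFinePartitions (κ : Cardinal.{u}) (M : Type u) [PseudoMetricSpace M] : Prop :=
  ∀ ε > 0, ∃ (ι : Type u) (c : M → ι), #ι ≤ κ ∧ ∀ a b, c a = c b → dist a b < ε

theorem Topology.IsInducing.exists_dense_mk_le {Z M : Type u} [TopologicalSpace Z]
    [PseudoMetricSpace M] {e : Z → M} (he : IsInducing e) {κ : Cardinal.{u}}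
    (hκ : ℵ₀ ≤ κ) (hM : HasFinePartitions κ M) : ∃ D : Set Z, Dense D ∧ #D ≤ κ := by
  choose ι c hcκ hc using fun n : ℕ => hM (1 / (n + 1)) Nat.one_div_pos_of_nat
  let pick : (Σ n, range (c n ∘ e)) → Z := fun p => rangeSplitting (c p.1 ∘ e) p.2
  refine ⟨range pick, he.dense_iff.2 fun z => Metric.mem_closure_iff.2 fun ε hε => ?_,
    mk_range_le.trans (mk_sigma_nat_le hκ fun n => (mk_set_le _).trans (hcκ n))⟩
  obtain ⟨n, hn⟩ := exists_nat_one_div_lt hε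
  let w := pick ⟨n, c n (e z), z, rfl⟩
  have hw : c n (e w) = c n (e z) := apply_rangeSplitting (c n ∘ e) _
  exact ⟨e w, mem_image_of_mem e (mem_range_self _),
    (dist_comm _ _).trans_lt ((hc n _ _ hw).trans hn)⟩

theorem ContinuousMap.dist_lt_of_close_on_net {K Y : Type*} [PseudoMetricSpace K]
    [CompactSpace K] [PseudoMetricSpace Y] {f g : C(K, Y)} {T : Set K} {δ η : ℝ} (hη : 0 < η)
    (hT : ∀ a, ∃ t : T, dist a (t : K) < δ)
    (hf : ∀ a b, dist a b < δ → dist (f a) (f b) < η)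
    (hg : ∀ a b, dist a b < δ → dist (g a) (g b) < η) (v : T → Y)
    (hfv : ∀ t : T, dist (f t) (v t) < η) (hgv : ∀ t : T, dist (g t) (v t) < η) :
    dist f g < 4 * η := by
  refine (dist_lt_iff (by positivity)).2 fun a => ?_
  obtain ⟨t, hat⟩ := hT a
  calc dist (f a) (g a) ≤ dist (f a) (f t) + dist (f t) (g t) + dist (g t) (g a) :=
        dist_triangle4 _ _ _ _
    _ ≤ dist (f a) (f t) + (dist (f t) (v t) + dist (g t) (v t)) + dist (g a) (g t) := by
        rw [dist_comm (g t)]; gcongr; exact dist_triangle_right _ _ _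
    _ < η + (η + η) + η := by
        gcongr
        exacts [hf a t hat, hfv t, hgv t, hg a t hat]
    _ = 4 * η := by ring

theorem ContinuousMap.hasFinePartitions {K Y : Type u} [PseudoMetricSpace K] [CompactSpace K]
    [PseudoMetricSpace Y] {κ : Cardinal.{u}} (hκ : ℵ₀ ≤ κ) {S : Set Y} (hS : Dense S)
    (hSκ : #S ≤ κ) : HasFinePartitions κ C(K, Y) := by
  intro ε hε
  have hnet (n : ℕ) :
      ∃ T : Set K, T.Finite ∧ ∀ a, ∃ t : T, dist a (t : K) < 1 / (n + 1) := by
    obtain ⟨T, -, hTfin, hT⟩ :=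
      finite_cover_balls_of_compact (isCompact_univ (X := K)) n.one_div_pos_of_nat
    refine ⟨T, hTfin, fun a => ?_⟩
    obtain ⟨t, htT, hat⟩ := mem_iUnion₂.1 (hT (mem_univ a))
    exact ⟨⟨t, htT⟩, hat⟩
  choose T hTfin hT using hnet
  have hcode (f : C(K, Y)) : ∃ d : Σ n, T n → S,
      (∀ a b, dist a b < 1 / (d.1 + 1) → dist (f a) (f b) < ε / 4) ∧
        ∀ t : T d.1, dist (f t) (d.2 t) < ε / 4 := by
    obtain ⟨δ, hδ, hfδ⟩ := Metric.uniformContinuous_iff.1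
      (CompactSpace.uniformContinuous_of_continuous f.continuous) (ε / 4) (by positivity)
    obtain ⟨n, hn⟩ := exists_nat_one_div_lt hδ
    have hv (t : T n) : ∃ s : S, dist (f t) s < ε / 4 := by
      obtain ⟨s, hs, hfs⟩ := hS.exists_dist_lt (f t) (by positivity : 0 < ε / 4)
      exact ⟨⟨s, hs⟩, hfs⟩
    choose v hv using hv
    exact ⟨⟨n, v⟩, fun a b hab => hfδ (hab.trans hn), hv⟩
  choose code hcode_uc hcode_close using hcode
  have hcodeκ : #(Σ n, T n → S) ≤ κ := mk_sigma_nat_le hκ fun n =>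
    haveI := (hTfin n).to_subtype; mk_arrow_le_of_finite hκ hSκ
  refine ⟨_, code, hcodeκ, fun f g hfg => ?_⟩
  have hg_uc := hcode_uc g
  have hg_close := hcode_close g
  rw [← hfg] at hg_uc hg_close
  calc dist f g < 4 * (ε / 4) := dist_lt_of_close_on_net (by positivity) (hT _) (hcode_uc f)
        hg_uc (fun t => ((code f).2 t : Y)) (hcode_close f) hg_close
    _ = ε := by ring

theorem IsLocallyConstant.range_eq_image_of_dense {Z β : Type*} [TopologicalSpace Z] {f : Z → β}
    (hf : IsLocallyConstant f) {D : Set Z} (hD : Dense D) : range f = f '' D := by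
  refine (image_subset_range f D).antisymm' ?_
  rintro _ ⟨z, rfl⟩
  obtain ⟨d, hdz, hdD⟩ := hD.inter_open_nonempty _ (hf.isOpen_fiber (f z)) ⟨z, rfl⟩
  exact ⟨d, hdD, hdz⟩

theorem Path.isInducing_coe {X : Type*} [TopologicalSpace X] {x y : X} :
    IsInducing ((↑) : Path x y → C(unitInterval, X)) :=
  ⟨rfl⟩

section Loops

variable {X : Type u} [TopologicalSpace X] {x : X} {G : Type*} [Group G]

noncomputable def loopValue (φ : FundamentalGroup X x →* G) (p : Path x x) : G :=
  φ (fromPath (X := TopCat.of X) ⟦p⟧)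

theorem range_loopValue (φ : FundamentalGroup X x →* G) : range (loopValue φ) = range φ :=
  Function.Surjective.range_comp (fun a => Quotient.exists_rep (toPath (X := TopCat.of X) a)) φ

theorem loopValue_trans_symm (φ : FundamentalGroup X x →* G) (p q : Path x x) :
    loopValue φ (q.trans p.symm) = (loopValue φ p)⁻¹ * loopValue φ q := by
  simp only [loopValue, ← map_inv, ← map_mul]
  rfl

theorem isLocallyConstant_loopValue {φ : FundamentalGroup X x →* G}
    (hφ : IsOpen {p : Path x x | loopValue φ p = 1}) : IsLocallyConstant (loopValue φ) := by
  refine IsLocallyConstant.iff_isOpen_fiber_apply.2 fun p => ?_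
  have hfiber : loopValue φ ⁻¹' {loopValue φ p} =
      (fun q => q.trans p.symm) ⁻¹' {q | loopValue φ q = 1} := by
    ext q
    simp only [mem_preimage, mem_singleton_iff, mem_ofPred_eq, loopValue_trans_symm,
      inv_mul_eq_one, eq_comm]
  rw [hfiber]
  exact hφ.preimage (continuous_id.path_trans continuous_const)

end Loops

/-- If `X` is a locally path-connected metric space that is `κ`-Lindelöf (equivalently,
has a dense subset of cardinality at most `κ`) and `G` is n-slender, then the image of
any homomorphism `φ : π₁(X) → G` has cardinality at most `κ`. -/
theorem image_card_le_of_nslender {X : Type} [MetricSpace X] [PathConnectedSpace X]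
    [LocallyPathConnectedSpace X] (κ : Cardinal) (hκ : Cardinal.aleph0 ≤ κ)
    (hLindelof : ∃ s : Set X, Dense s ∧ Cardinal.mk s ≤ κ)
    (G : Type) [Group G] (hG : IsNSlender G)
    (x : X) (φ : FundamentalGroup X x →* G) :
    Cardinal.mk (Set.range φ) ≤ κ := by
  obtain ⟨S, hS, hSκ⟩ := hLindelof
  obtain ⟨D, hD, hDκ⟩ :=
    Path.isInducing_coe.exists_dense_mk_le hκ (ContinuousMap.hasFinePartitions hκ hS hSκ)
  rw [← range_loopValue, (isLocallyConstant_loopValue (hG X x φ)).range_eq_image_of_dense hD]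
  exact mk_image_le.trans hDκ
end
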